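/- arXiv:2502.05180 — 6 statements merged into one kernel-verified Lean document; each statement's English description precedes it below -/
import Mathlib

section
/- There is no strictly increasing concave function v : ℝ² → ℝ such that y° = (0,0) uniquely maximizes v over Y = {(x², -x³) : x ≥ 0}; in fact there is no strictly increasing concave v : ℝ² → ℝ with v(y) ≤ v(0,0) for all y ∈ Y. -/
/-- There is no strictly increasing concave `v : ℝ² → ℝ` with `v y ≤ v (0,0)`
for all `y ∈ Y = {(x², -x³) : x ≥ 0}` (in particular none maximized uniquely at `(0,0)`). -/
theorem stmt_4 :
    ¬ ∃ v : ℝ × ℝ → ℝ,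
      (∀ y y' : ℝ × ℝ, y' ≤ y → y ≠ y' → v y' < v y) ∧
      ConcaveOn ℝ Set.univ v ∧
      (∀ y ∈ {y : ℝ × ℝ | ∃ x : ℝ, 0 ≤ x ∧ y = (x ^ 2, -x ^ 3)}, v y ≤ v (0, 0)) := by
  rintro ⟨v, hmono, hconc, hmax⟩
  -- strict increase gives positive gaps
  have ha : v (0, 0) < v (1, 0) := by
    apply hmono
    · exact ⟨by norm_num, le_refl 0⟩
    · simp
  have hb : v (0, -1) < v (0, 0) := by
    apply hmono
    · exact ⟨le_refl 0, by norm_num⟩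
    · intro h; injection h with h1 h2; norm_num at h2
  obtain ⟨a, ha'⟩ : ∃ a : ℝ, a = v (1, 0) - v (0, 0) := ⟨_, rfl⟩
  obtain ⟨b, hb'⟩ : ∃ b : ℝ, b = v (0, 0) - v (0, -1) := ⟨_, rfl⟩
  have hapos : 0 < a := by rw [ha']; exact sub_pos.mpr ha
  have hbpos : 0 < b := by rw [hb']; exact sub_pos.mpr hb
  obtain ⟨t, ht'⟩ : ∃ t : ℝ, t = min (1/2) (a / (2 * b)) := ⟨_, rfl⟩
  have htpos : 0 < t := by rw [ht']; exact lt_min (by norm_num) (by positivity)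
  have htle : t ≤ 1/2 := ht' ▸ min_le_left _ _
  have htb : t * b ≤ a / 2 := by
    have : t ≤ a / (2 * b) := ht' ▸ min_le_right _ _
    calc t * b ≤ (a / (2 * b)) * b := by nlinarith
    _ = a / 2 := by field_simp
  -- concavity along the first axis: v (t^2, 0) ≥ (1-t^2) v(0,0) + t^2 v(1,0)
  have hc1 : (1 - t ^ 2) • v (0, 0) + t ^ 2 • v (1, 0)
      ≤ v ((1 - t ^ 2) • ((0, 0) : ℝ × ℝ) + t ^ 2 • ((1, 0) : ℝ × ℝ)) :=
    hconc.2 (Set.mem_univ _) (Set.mem_univ _) (by nlinarith) (by positivity) (by ring)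
  have he1 : (1 - t ^ 2) • ((0, 0) : ℝ × ℝ) + t ^ 2 • ((1, 0) : ℝ × ℝ) = (t ^ 2, 0) := by
    simp [Prod.ext_iff]
  rw [he1] at hc1
  -- concavity along the vertical line: v (t^2, -t^3) ≥ (1-t^3) v(t^2,0) + t^3 v(t^2,-1)
  have hc2 : (1 - t ^ 3) • v (t ^ 2, 0) + t ^ 3 • v (t ^ 2, -1)
      ≤ v ((1 - t ^ 3) • ((t ^ 2, 0) : ℝ × ℝ) + t ^ 3 • ((t ^ 2, -1) : ℝ × ℝ)) :=
    hconc.2 (Set.mem_univ _) (Set.mem_univ _) (by nlinarith) (by positivity) (by ring)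
  have he2 : (1 - t ^ 3) • ((t ^ 2, 0) : ℝ × ℝ) + t ^ 3 • ((t ^ 2, -1) : ℝ × ℝ)
      = (t ^ 2, -t ^ 3) := by
    simp [Prod.ext_iff, Prod.smul_def, Prod.add_def]
    ring
  rw [he2] at hc2
  -- monotonicity: v (t^2, -1) > v (0, -1)
  have hm : v (0, -1) < v (t ^ 2, -1) := by
    apply hmono
    · exact ⟨by positivity, le_refl _⟩
    · intro h; injection h with h1 h2; nlinarith
  -- the curve point is dominated by (0,0)
  have hmx : v (t ^ 2, -t ^ 3) ≤ v (0, 0) := by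
    apply hmax
    exact ⟨t, le_of_lt htpos, rfl⟩
  have hsm : ∀ (c : ℝ) (x : ℝ), c • x = c * x := fun _ _ => rfl
  rw [hsm, hsm] at hc1 hc2
  -- combine everything
  have ht3nn : (0:ℝ) ≤ 1 - t ^ 3 := by nlinarith
  have k1 := mul_le_mul_of_nonneg_left hc1 ht3nn
  have k2 := mul_le_mul_of_nonneg_left hm.le (pow_nonneg htpos.le 3)
  have key0 : v (0, 0) + (1 - t ^ 3) * t ^ 2 * (v (1, 0) - v (0, 0))
      - t ^ 3 * (v (0, 0) - v (0, -1)) ≤ v (0, 0) := by nlinarith [k1, k2, hc2, hmx]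
  have key : (1 - t ^ 3) * t ^ 2 * a ≤ t ^ 3 * b := by
    rw [ha', hb']; nlinarith [key0]
  have ht2a : 0 < t ^ 2 * a := by positivity
  have h8 : t ^ 3 ≤ 1 / 8 := by nlinarith
  have h9 := mul_le_mul_of_nonneg_right h8 ht2a.le
  have h10 := mul_le_mul_of_nonneg_left htb (sq_nonneg t)
  nlinarith [key, h9, h10, ht2a]
end

section
/- There is no continuous, strictly increasing, strictly concave function v : ℝ² → ℝ such that (0,0) is the unique maximizer of v over Y = {(x², -x³) : x ≥ 0}. (This proves Soland's conjecture: for an improperly efficient decision, no such value function need exist.) -/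
/-- Soland's conjecture: there is no continuous, strictly increasing, strictly concave
`v : ℝ² → ℝ` for which `(0,0)` is the unique maximizer of `v` over
`Y = {(x², -x³) : x ≥ 0}`. -/
theorem stmt_5 :
    ¬ ∃ v : ℝ × ℝ → ℝ,
      Continuous v ∧
      (∀ y y' : ℝ × ℝ, y' ≤ y → y ≠ y' → v y' < v y) ∧
      StrictConcaveOn ℝ Set.univ v ∧
      (∀ y ∈ {y : ℝ × ℝ | ∃ x : ℝ, 0 ≤ x ∧ y = (x ^ 2, -x ^ 3)},
        y ≠ (0, 0) → v y < v (0, 0)) := by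
  rintro ⟨v, hcont, hmono, hconc, hmax⟩
  -- v(1,0) > v(0,0)
  have h10 : v (0, 0) < v (1, 0) := by
    apply hmono (1, 0) (0, 0)
    · exact Prod.mk_le_mk.mpr ⟨by norm_num, le_refl 0⟩
    · simp
  -- continuity of x ↦ v (1, -x)
  have hg : Continuous fun x : ℝ => v (1, -x) :=
    hcont.comp (continuous_const.prodMk continuous_neg)
  have h1 : ∀ᶠ x in nhds (0 : ℝ), v (0, 0) < v (1, -x) := by
    have ht : Filter.Tendsto (fun x : ℝ => v (1, -x)) (nhds 0) (nhds (v (1, -0))) :=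
      hg.continuousAt
    simp only [neg_zero] at ht
    exact ht.eventually (eventually_gt_nhds h10)
  have h2 : ∀ᶠ x in nhds (0 : ℝ), x ∈ Set.Ioo (-1 : ℝ) 1 :=
    Ioo_mem_nhds (by norm_num) (by norm_num)
  have h3 : ∀ᶠ x in nhdsWithin (0 : ℝ) (Set.Ioi 0),
      (v (0, 0) < v (1, -x) ∧ x ∈ Set.Ioo (-1 : ℝ) 1) ∧ x ∈ Set.Ioi (0 : ℝ) :=
    (((h1.and h2).filter_mono nhdsWithin_le_nhds).and eventually_mem_nhdsWithin)
  obtain ⟨x, ⟨hv, hx1⟩, hx0⟩ := h3.exists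
  have hx0' : (0 : ℝ) < x := hx0
  have hxlt : x < 1 := hx1.2
  -- strict concavity along the segment from (0,0) to (1,-x)
  have key := hconc.2 (Set.mem_univ ((1 : ℝ), -x)) (Set.mem_univ ((0 : ℝ), (0 : ℝ)))
    (by simp) (show (0 : ℝ) < x ^ 2 by positivity)
    (show (0 : ℝ) < 1 - x ^ 2 by nlinarith) (by ring)
  have hpt : x ^ 2 • ((1 : ℝ), -x) + (1 - x ^ 2) • ((0 : ℝ), (0 : ℝ))
      = ((x ^ 2 : ℝ), -x ^ 3) := by
    simp [Prod.ext_iff, smul_eq_mul]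
    ring
  rw [hpt] at key
  simp only [smul_eq_mul] at key
  have hP : v (x ^ 2, -x ^ 3) < v (0, 0) := by
    apply hmax
    · exact ⟨x, le_of_lt hx0', rfl⟩
    · simp [Prod.ext_iff]
      positivity
  nlinarith [mul_pos (show (0:ℝ) < x ^ 2 by positivity) (sub_pos.mpr hv)]
end

section
/- If x° maximizes Σᵢ λᵢ fᵢ(x) over X for strictly positive weights λᵢ, then x° is properly efficient with constant M = (max_j λ_j)/(min_i λᵢ) · (p - 1) (in particular with some M > 0). -/
/-- If `x°` maximizes `∑ i, λᵢ * fᵢ(x)` over `X` for strictly positive weights, then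
`x°` is properly efficient with constant `M = (max_j λ_j)/(min_i λᵢ) * (p - 1)`. -/
theorem stmt_12 {X : Type*} {p : ℕ} (hp : 2 ≤ p) (f : X → Fin p → ℝ) (x0 : X)
    (lam : Fin p → ℝ) (hlam : ∀ i, 0 < lam i)
    (hmax : ∀ x : X, ∑ i, lam i * f x i ≤ ∑ i, lam i * f x0 i) :
    (¬ ∃ x : X, (∀ i, f x0 i ≤ f x i) ∧ f x ≠ f x0) ∧
    (0 : ℝ) < (Finset.univ.sup' ⟨⟨0, by omega⟩, Finset.mem_univ _⟩ lam /
        Finset.univ.inf' ⟨⟨0, by omega⟩, Finset.mem_univ _⟩ lam) * (p - 1) ∧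
    ∀ (i : Fin p) (x : X), f x0 i < f x i →
      ∃ j : Fin p, f x j < f x0 j ∧
        (f x i - f x0 i) / (f x0 j - f x j) ≤
          (Finset.univ.sup' ⟨⟨0, by omega⟩, Finset.mem_univ _⟩ lam /
            Finset.univ.inf' ⟨⟨0, by omega⟩, Finset.mem_univ _⟩ lam) * (p - 1) := by
  have hne : (Finset.univ : Finset (Fin p)).Nonempty := ⟨⟨0, by omega⟩, Finset.mem_univ _⟩
  set S := Finset.univ.sup' hne lam with hS
  set I := Finset.univ.inf' hne lam with hI
  have hIpos : 0 < I := by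
    obtain ⟨j, _, hj⟩ := Finset.exists_mem_eq_inf' hne lam
    rw [hI, hj]; exact hlam j
  have hSI : I ≤ S := le_trans (Finset.inf'_le _ (Finset.mem_univ hne.choose))
    (Finset.le_sup' _ (Finset.mem_univ hne.choose))
  have hSpos : 0 < S := lt_of_lt_of_le hIpos hSI
  have hp1 : (1 : ℝ) ≤ (p : ℝ) - 1 := by
    have : (2 : ℝ) ≤ (p : ℝ) := by exact_mod_cast hp
    linarith
  refine ⟨?_, ?_, ?_⟩
  · rintro ⟨x, hle, hne'⟩
    have : ∃ k, f x0 k ≠ f x k := by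
      by_contra h
      push_neg at h
      exact hne' (funext fun k => (h k).symm)
    obtain ⟨k, hk⟩ := this
    have hlt : ∑ i, lam i * f x0 i < ∑ i, lam i * f x i := by
      apply Finset.sum_lt_sum (fun j _ => by
        have := hle j; nlinarith [hlam j])
      exact ⟨k, Finset.mem_univ k, by
        have := lt_of_le_of_ne (hle k) hk
        nlinarith [hlam k]⟩
    exact absurd (hmax x) (not_le.mpr hlt)
  · positivity
  · intro i x hix
    set Δ := f x i - f x0 i with hΔ
    have hΔpos : 0 < Δ := by simp [hΔ]; linarith
    -- sum inequality
    have hsum : lam i * Δ ≤ ∑ j ∈ Finset.univ.erase i, lam j * (f x0 j - f x j) := by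
      have h0 : 0 ≤ ∑ j, lam j * (f x0 j - f x j) := by
        have := hmax x
        have : ∑ j, lam j * (f x0 j - f x j)
            = ∑ j, lam j * f x0 j - ∑ j, lam j * f x j := by
          rw [← Finset.sum_sub_distrib]; apply Finset.sum_congr rfl; intro j _; ring
        rw [this]; linarith [hmax x]
      have hsplit := Finset.add_sum_erase Finset.univ (fun j => lam j * (f x0 j - f x j))
        (Finset.mem_univ i)
      have : lam i * (f x0 i - f x i) + ∑ j ∈ Finset.univ.erase i, lam j * (f x0 j - f x j)
          = ∑ j, lam j * (f x0 j - f x j) := hsplit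
      have : lam i * Δ = -(lam i * (f x0 i - f x i)) := by simp [hΔ]; ring
      rw [this]
      linarith [hsplit, h0]
    -- find j with big term
    have hcard : ((Finset.univ.erase i).card : ℝ) = (p : ℝ) - 1 := by
      rw [Finset.card_erase_of_mem (Finset.mem_univ i)]
      simp [Fintype.card_fin]
      rw [Nat.cast_sub (by omega)]
      simp
    have hconst : ∑ _j ∈ Finset.univ.erase i, (lam i * Δ / ((p : ℝ) - 1))
        ≤ ∑ j ∈ Finset.univ.erase i, lam j * (f x0 j - f x j) := by
      rw [Finset.sum_const, nsmul_eq_mul, hcard]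
      rw [mul_div_cancel₀]
      · exact hsum
      · linarith
    have hnonempty : (Finset.univ.erase i).Nonempty := by
      rw [← Finset.card_pos]
      have : (Finset.univ.erase i).card = p - 1 := by
        rw [Finset.card_erase_of_mem (Finset.mem_univ i)]; simp
      omega
    obtain ⟨j, hjmem, hj⟩ := Finset.exists_le_of_sum_le hnonempty hconst
    have hlamjΔ : lam i * Δ / ((p : ℝ) - 1) ≤ lam j * (f x0 j - f x j) := hj
    have hcpos : 0 < lam i * Δ / ((p : ℝ) - 1) := div_pos (mul_pos (hlam i) hΔpos) (by linarith)
    have hδpos : 0 < f x0 j - f x j := by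
      by_contra h
      push_neg at h
      nlinarith [hlam j]
    refine ⟨j, by linarith, ?_⟩
    rw [div_le_iff₀ hδpos]
    have hIi : I ≤ lam i := Finset.inf'_le _ (Finset.mem_univ i)
    have hjS : lam j ≤ S := Finset.le_sup' _ (Finset.mem_univ j)
    have key : lam i * Δ ≤ ((p : ℝ) - 1) * (lam j * (f x0 j - f x j)) := by
      rw [div_le_iff₀ (by linarith : (0:ℝ) < (p:ℝ)-1)] at hlamjΔ
      linarith [hlamjΔ]
    have h1 : I * Δ ≤ lam i * Δ := by nlinarith
    have h2 : ((p : ℝ) - 1) * (lam j * (f x0 j - f x j))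
        ≤ ((p : ℝ) - 1) * (S * (f x0 j - f x j)) := by nlinarith [mul_le_mul_of_nonneg_right hjS hδpos.le]
    rw [div_mul_eq_mul_div, div_mul_eq_mul_div, le_div_iff₀ hIpos]
    nlinarith
end

section
/- Let Y = {(x², -x³) : x ≥ 0}. If v : ℝ² → ℝ is concave and v(y) ≤ v(0,0) for all y ∈ Y, then the one-variable concave function t ↦ v(t, 0) satisfies v(1,0) ≤ v(0,0). Hence no concave v that is strictly increasing in the first coordinate (v(y₁', y₂) > v(y₁, y₂) for y₁' > y₁) can be maximized over Y at (0,0). -/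
/-- If `v : ℝ² → ℝ` is concave and `v y ≤ v (0,0)` for all `y ∈ Y = {(x², -x³) : x ≥ 0}`,
then `v (1,0) ≤ v (0,0)`; hence no concave `v` strictly increasing in the first
coordinate is maximized over `Y` at `(0,0)`. -/
theorem stmt_14 :
    (∀ v : ℝ × ℝ → ℝ, ConcaveOn ℝ Set.univ v →
      (∀ y ∈ {y : ℝ × ℝ | ∃ x : ℝ, 0 ≤ x ∧ y = (x ^ 2, -x ^ 3)}, v y ≤ v (0, 0)) →
      v (1, 0) ≤ v (0, 0)) ∧
    ¬ ∃ v : ℝ × ℝ → ℝ, ConcaveOn ℝ Set.univ v ∧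
      (∀ y₁ y₁' y₂ : ℝ, y₁ < y₁' → v (y₁, y₂) < v (y₁', y₂)) ∧
      (∀ y ∈ {y : ℝ × ℝ | ∃ x : ℝ, 0 ≤ x ∧ y = (x ^ 2, -x ^ 3)}, v y ≤ v (0, 0)) := by
  have key : ∀ v : ℝ × ℝ → ℝ, ConcaveOn ℝ Set.univ v →
      (∀ y ∈ {y : ℝ × ℝ | ∃ x : ℝ, 0 ≤ x ∧ y = (x ^ 2, -x ^ 3)}, v y ≤ v (0, 0)) →
      v (1, 0) ≤ v (0, 0) := by
    intro v hv hle
    -- On the vertical line y₁ = 1, for small t > 0 we have v (1, -t) ≤ v (0,0).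
    have h1 : ∀ t : ℝ, 0 < t → t < 1 → v (1, -t) ≤ v (0, 0) := by
      intro t ht ht1
      have hcurve : v (t ^ 2, -t ^ 3) ≤ v (0, 0) := hle _ ⟨t, ht.le, rfl⟩
      have hconc := hv.2 (Set.mem_univ ((1 : ℝ), -t)) (Set.mem_univ ((0 : ℝ), (0 : ℝ)))
        (by positivity : (0:ℝ) ≤ t ^ 2) (by nlinarith : (0:ℝ) ≤ 1 - t ^ 2) (by ring)
      have heq : t ^ 2 • ((1 : ℝ), -t) + (1 - t ^ 2) • ((0 : ℝ), (0 : ℝ))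
          = ((t ^ 2 : ℝ), -t ^ 3) := by
        simp [Prod.ext_iff, Prod.smul_mk, smul_eq_mul]
        ring
      rw [heq] at hconc
      simp only [smul_eq_mul] at hconc
      have ht2 : (0:ℝ) < t ^ 2 := by positivity
      nlinarith [hconc, hcurve]
    -- v is continuous (concave on all of ℝ²).
    have hcont : ContinuousOn v Set.univ := hv.continuousOn isOpen_univ
    have hc : Continuous v := continuousOn_univ.mp hcont
    have htend : Filter.Tendsto (fun t : ℝ => v (1, -t)) (nhdsWithin 0 (Set.Ioi 0))
        (nhds (v (1, 0))) := by
      have : Filter.Tendsto (fun t : ℝ => v (1, -t)) (nhds 0) (nhds (v (1, -0))) :=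
        (hc.comp (by continuity)).tendsto 0
      simpa using this.mono_left nhdsWithin_le_nhds
    refine le_of_tendsto htend ?_
    filter_upwards [Ioo_mem_nhdsGT_of_mem (by norm_num : (0:ℝ) ∈ Set.Ico 0 1)] with t ht
    exact h1 t ht.1 ht.2
  refine ⟨key, ?_⟩
  rintro ⟨v, hv, hstrict, hle⟩
  exact absurd (key v hv hle) (not_le.2 (hstrict 0 1 0 zero_lt_one))
end

section
/- Suppose v : ℝ² → ℝ is concave and (0,0) maximizes v over Y = {(x², -x³) : x ≥ 0}. Then the directional derivative of v at (0,0) in direction (1,0) is ≤ 0; formally, limsup_{t→0⁺} (v(t,0) - v(0,0))/t ≤ 0. -/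
set_option linter.unusedVariables false

private lemma comb_aux (v : ℝ × ℝ → ℝ) (hconc : ConcaveOn ℝ Set.univ v)
    (p q : ℝ × ℝ) (θ : ℝ) (h0 : 0 ≤ θ) (h1 : θ ≤ 1) :
    θ * v p + (1 - θ) * v q ≤ v (θ * p.1 + (1 - θ) * q.1, θ * p.2 + (1 - θ) * q.2) := by
  have h2 := hconc.2
  have := @h2 p (Set.mem_univ p) q (Set.mem_univ q) θ (1 - θ) h0 (by linarith) (by ring)
  simpa [Prod.smul_def, smul_eq_mul, Prod.mk_add_mk] using this

private lemma key_aux (v : ℝ × ℝ → ℝ) (hconc : ConcaveOn ℝ Set.univ v)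
    (hmax : ∀ y ∈ {y : ℝ × ℝ | ∃ x : ℝ, 0 ≤ x ∧ y = (x ^ 2, -x ^ 3)}, v y ≤ v (0, 0))
    (T t : ℝ) (hT0 : 0 < T) (hT1 : T ≤ 1) (ht0 : 0 < t) (htT : t ≤ T) :
    v (t, 0) - v (0, 0) ≤
      (t / T) * (v (0, 0) - (1 - Real.sqrt t) * v (T, 0) - Real.sqrt t * v (T, -T)) := by
  set a := v (0, 0) with ha
  set w := Real.sqrt t with hwdef
  have hw0 : 0 < w := Real.sqrt_pos.2 ht0
  have hw2 : w ^ 2 = t := Real.sq_sqrt ht0.le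
  have hw1 : w ≤ 1 := by
    nlinarith [hw2, hw0]
  -- (A) point of Y with x = w/2
  have hA : v ((w / 2) ^ 2, -(w / 2) ^ 3) ≤ a := hmax _ ⟨w / 2, by positivity, rfl⟩
  have hA' : v (t / 4, -(t * w) / 8) ≤ a := by
    have e1 : (w / 2) ^ 2 = t / 4 := by rw [div_pow]; rw [hw2]; norm_num
    have e2 : -(w / 2) ^ 3 = -(t * w) / 8 := by
      have : w ^ 3 = t * w := by nlinarith [hw2]
      field_simp [div_pow]
      nlinarith [hw2]
    rw [e1, e2] at hA
    exact hA
  -- (B) v (t, -(t*w)/2) ≤ a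
  have hB : v (t, -(t * w) / 2) ≤ a := by
    have h := comb_aux v hconc (t, -(t * w) / 2) (0, 0) (1/4) (by norm_num) (by norm_num)
    simp only at h
    have e : ((1:ℝ)/4 * t + (1 - 1/4) * 0, 1/4 * (-(t * w) / 2) + (1 - 1/4) * 0)
        = ((t / 4 : ℝ), -(t * w) / 8) := by rw [Prod.mk.injEq]; exact ⟨by ring, by ring⟩
    rw [e] at h
    have := le_trans h hA'
    linarith
  -- (C) midpoint
  have hC : (1/2 : ℝ) * v (t, 0) + (1/2 : ℝ) * v (t, -(t * w)) ≤ a := by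
    have h := comb_aux v hconc (t, 0) (t, -(t * w)) (1/2) (by norm_num) (by norm_num)
    simp only at h
    have e : ((1:ℝ)/2 * t + (1 - 1/2) * t, 1/2 * 0 + (1 - 1/2) * (-(t * w)))
        = ((t : ℝ), -(t * w) / 2) := by rw [Prod.mk.injEq]; exact ⟨by ring, by ring⟩
    rw [e] at h
    calc (1/2 : ℝ) * v (t, 0) + (1/2 : ℝ) * v (t, -(t * w)) ≤ v (t, -(t * w) / 2) := by
          linarith
      _ ≤ a := hB
  -- (D) scaling from (T, -T*w)
  have hD : (t / T) * v (T, -(T * w)) + (1 - t / T) * a ≤ v (t, -(t * w)) := by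
    have h := comb_aux v hconc (T, -(T * w)) (0, 0) (t / T)
      (by positivity) (by rw [div_le_one hT0]; exact htT)
    simp only at h
    have e : ((t / T) * T + (1 - t / T) * 0, (t / T) * (-(T * w)) + (1 - t / T) * 0)
        = ((t : ℝ), -(t * w)) := by
      have hT' : T ≠ 0 := ne_of_gt hT0
      rw [Prod.mk.injEq]
      constructor <;> field_simp <;> ring
    rw [e] at h
    exact h
  -- (E) vertical segment at x = T
  have hE : w * v (T, -T) + (1 - w) * v (T, 0) ≤ v (T, -(T * w)) := by
    have h := comb_aux v hconc (T, -T) (T, 0) w hw0.le hw1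
    simp only at h
    have e : ((w * T + (1 - w) * T : ℝ), w * (-T) + (1 - w) * 0) = ((T : ℝ), -(T * w)) := by
      rw [Prod.mk.injEq]; exact ⟨by ring, by ring⟩
    rw [e] at h
    exact h
  have hμ0 : (0:ℝ) ≤ t / T := by positivity
  nlinarith [mul_le_mul_of_nonneg_left hE hμ0, hC, hD]


/-- If `v : ℝ² → ℝ` is concave and `(0,0)` maximizes `v` over
`Y = {(x², -x³) : x ≥ 0}`, then the one-sided directional derivative of `v` at `(0,0)`
in direction `(1,0)` is `≤ 0`: `limsup_{t→0⁺} (v (t,0) - v (0,0))/t ≤ 0`. -/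
theorem stmt_16 (v : ℝ × ℝ → ℝ) (hconc : ConcaveOn ℝ Set.univ v)
    (hmax : ∀ y ∈ {y : ℝ × ℝ | ∃ x : ℝ, 0 ≤ x ∧ y = (x ^ 2, -x ^ 3)}, v y ≤ v (0, 0)) :
    Filter.limsup (fun t : ℝ => (v (t, 0) - v (0, 0)) / t)
      (nhdsWithin 0 (Set.Ioi 0)) ≤ 0 := by
  set a := v (0, 0) with ha
  set g : ℝ → ℝ := fun t => (v (t, 0) - a) / t with hg
  -- lower bound: g t ≥ v (1,0) - a for t ∈ Ioc 0 1
  have hlow : ∀ t ∈ Set.Ioc (0:ℝ) 1, v (1, 0) - a ≤ g t := by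
    intro t ht
    have h := comb_aux v hconc (1, 0) (0, 0) t ht.1.le ht.2
    simp only at h
    have e : (t * 1 + (1 - t) * 0, t * 0 + (1 - t) * 0) = ((t : ℝ), (0:ℝ)) := by
      rw [Prod.mk.injEq]; exact ⟨by ring, by ring⟩
    rw [e] at h
    rw [hg]
    rw [le_div_iff₀ ht.1]
    nlinarith
  have hIoc : Set.Ioc (0:ℝ) 1 ∈ nhdsWithin (0:ℝ) (Set.Ioi 0) :=
    Ioc_mem_nhdsGT_of_mem (by constructor <;> norm_num)
  have hev_low : ∀ᶠ t in nhdsWithin (0:ℝ) (Set.Ioi 0), v (1, 0) - a ≤ g t :=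
    Filter.eventually_of_mem hIoc hlow
  have hcob : Filter.IsCoboundedUnder (· ≤ ·) (nhdsWithin (0:ℝ) (Set.Ioi 0)) g :=
    Filter.IsBoundedUnder.isCoboundedUnder_le ⟨v (1, 0) - a, Filter.eventually_map.2 hev_low⟩
  -- Claim 1 : limsup ≤ (a - v (T,0))/T for T ∈ (0,1]
  have claim1 : ∀ T : ℝ, 0 < T → T ≤ 1 →
      Filter.limsup g (nhdsWithin (0:ℝ) (Set.Ioi 0)) ≤ (a - v (T, 0)) / T := by
    intro T hT0 hT1
    refine le_of_forall_pos_le_add ?_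
    intro ε hε
    apply Filter.limsup_le_of_le hcob
    set K : ℝ := |v (T, 0) - v (T, -T)| + 1 with hK
    have hK0 : 0 < K := by positivity
    set δ : ℝ := min T ((ε * T / K) ^ 2) with hδ
    have hδ0 : 0 < δ := by
      apply lt_min hT0
      positivity
    have hset : Set.Ioc (0:ℝ) δ ∈ nhdsWithin (0:ℝ) (Set.Ioi 0) :=
      Ioc_mem_nhdsGT_of_mem ⟨le_refl 0, hδ0⟩
    refine Filter.eventually_of_mem hset ?_
    intro t ht
    have ht0 : 0 < t := ht.1
    have htT : t ≤ T := le_trans ht.2 (min_le_left _ _)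
    have hkey := key_aux v hconc hmax T t hT0 hT1 ht0 htT
    set w := Real.sqrt t with hw
    have hw0 : 0 ≤ w := Real.sqrt_nonneg t
    have hwδ : w ≤ ε * T / K := by
      rw [hw]
      have h1 : t ≤ (ε * T / K) ^ 2 := le_trans ht.2 (min_le_right _ _)
      have := Real.sqrt_le_sqrt h1
      calc Real.sqrt t ≤ Real.sqrt ((ε * T / K) ^ 2) := this
        _ = |ε * T / K| := Real.sqrt_sq_eq_abs _
        _ = ε * T / K := abs_of_pos (by positivity)
    -- g t ≤ (a - v(T,0))/T + w * (v(T,0) - v(T,-T))/T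
    have hgt : g t ≤ ((a - (1 - w) * v (T, 0) - w * v (T, -T))) / T := by
      rw [hg]
      simp only
      rw [div_le_div_iff₀ ht0 hT0]
      have := hkey
      have h2 : (t / T) * (a - (1 - w) * v (T, 0) - w * v (T, -T)) * T
          = (a - (1 - w) * v (T, 0) - w * v (T, -T)) * t := by
        field_simp
      nlinarith [hkey, ht0.le]
    have hbound : (a - (1 - w) * v (T, 0) - w * v (T, -T)) / T ≤ (a - v (T, 0)) / T + ε := by
      rw [div_le_iff₀ hT0] at *
      have habs : v (T, 0) - v (T, -T) ≤ K := by
        rw [hK]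
        have := le_abs_self (v (T, 0) - v (T, -T))
        linarith
      have hwK : w * (v (T, 0) - v (T, -T)) ≤ ε * T := by
        calc w * (v (T, 0) - v (T, -T)) ≤ w * K := by
              rcases le_or_gt (v (T, 0) - v (T, -T)) 0 with h | h
              · nlinarith
              · nlinarith
          _ ≤ (ε * T / K) * K := by nlinarith
          _ = ε * T := by field_simp
      have e2 : ((a - v (T, 0)) / T + ε) * T = (a - v (T, 0)) + ε * T := by
        field_simp
      rw [e2]
      nlinarith
    exact le_trans hgt hbound
  -- case analysis
  by_cases hcase : ∃ T : ℝ, 0 < T ∧ T ≤ 1 ∧ a ≤ v (T, 0)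
  · obtain ⟨T, hT0, hT1, hTa⟩ := hcase
    refine le_trans (claim1 T hT0 hT1) ?_
    apply div_nonpos_of_nonpos_of_nonneg <;> linarith
  · push_neg at hcase
    apply Filter.limsup_le_of_le hcob
    refine Filter.eventually_of_mem hIoc ?_
    intro t ht
    have := hcase t ht.1 ht.2
    show (v (t, 0) - a) / t ≤ 0
    apply div_nonpos_of_nonpos_of_nonneg (by linarith) ht.1.le
end

section
/- There exists a multicriteria optimization problem (X, f) with p = 2 and an efficient decision x° ∈ X_E such that no strictly increasing concave function v : ℝ² → ℝ attains its maximum over Y = f(X) at f(x°). (Existence form of the main result, witnessed by X = [0,∞), f(x) = (x², -x³), x° = 0.) -/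
/-- Existence form of the main result: there is a bicriteria problem `(X, f)` with an
efficient decision `x°` such that no strictly increasing concave `v : ℝ² → ℝ` attains
its maximum over `Y = f(X)` at `f(x°)`. -/
theorem stmt_17 :
    ∃ (X : Set ℝ) (f : ℝ → ℝ × ℝ) (x0 : ℝ), x0 ∈ X ∧
      (¬ ∃ x ∈ X, f x0 ≤ f x ∧ f x ≠ f x0) ∧
      ¬ ∃ v : ℝ × ℝ → ℝ,
        (∀ y y' : ℝ × ℝ, y' ≤ y → y ≠ y' → v y' < v y) ∧
        ConcaveOn ℝ Set.univ v ∧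
        (∀ y ∈ f '' X, v y ≤ v (f x0)) := by
  refine ⟨Set.Ici 0, fun x => (x ^ 2, -x ^ 3), 0, Set.self_mem_Ici, ?_, ?_⟩
  · rintro ⟨x, hx, hle, hne⟩
    obtain ⟨h1, h2⟩ := Prod.mk_le_mk.mp hle
    have hx0 : x = 0 := by
      have hx' : (0:ℝ) ≤ x := hx
      have h2' : x ^ 3 ≤ 0 := by nlinarith
      have h3 : x ^ 3 = 0 := le_antisymm h2' (pow_nonneg hx' 3)
      exact pow_eq_zero_iff (by norm_num) |>.mp h3
    exact hne (by simp [hx0])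
  · rintro ⟨v, hmono, hconc, hmax⟩
    have hc : v ((0:ℝ),(0:ℝ)) < v (1,0) := by
      apply hmono (1,0) (0,0)
      · exact Prod.mk_le_mk.mpr ⟨by norm_num, le_refl _⟩
      · norm_num [Prod.ext_iff]
    have hD : v ((0:ℝ),(-1:ℝ)) < v (0,0) := by
      apply hmono (0,0) (0,-1)
      · exact Prod.mk_le_mk.mpr ⟨le_refl _, by norm_num⟩
      · norm_num [Prod.ext_iff]
    set c : ℝ := v (1,0) - v (0,0) with hc_def
    set D : ℝ := v (0,0) - v (0,-1) with hD_def
    have hcpos : 0 < c := sub_pos.mpr hc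
    have hDpos : 0 < D := sub_pos.mpr hD
    set t : ℝ := min (1/2) (c / (2 * D)) with ht_def
    have ht0 : 0 < t := lt_min (by norm_num) (div_pos hcpos (by linarith))
    have ht2 : t ≤ 1/2 := min_le_left _ _
    have htD : t * D ≤ c / 2 := by
      have := min_le_right (1/2 : ℝ) (c / (2 * D))
      calc t * D ≤ (c / (2 * D)) * D := by
            apply mul_le_mul_of_nonneg_right this (le_of_lt hDpos)
        _ = c / 2 := by field_simp
    have ht3 : t ^ 3 ≤ 1/8 := by
      calc t ^ 3 ≤ (1/2 : ℝ) ^ 3 := pow_le_pow_left₀ (le_of_lt ht0) ht2 3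
        _ = 1/8 := by norm_num
    have hden : 0 < 1 - t ^ 3 := by linarith
    set a : ℝ := t ^ 2 / (1 - t ^ 3) with ha_def
    have hapos : 0 < a := div_pos (by positivity) hden
    have ha1 : a ≤ 1 := by
      rw [ha_def, div_le_one hden]
      nlinarith
    have haeq : (1 - t ^ 3) * a = t ^ 2 := by
      rw [ha_def]; field_simp
    -- concavity along the first axis
    have hA : (1 - a) * v (0,0) + a * v (1,0) ≤ v (a, 0) := by
      have h := hconc.2 (Set.mem_univ ((0:ℝ),(0:ℝ))) (Set.mem_univ ((1:ℝ),(0:ℝ)))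
        (by linarith : (0:ℝ) ≤ 1 - a) (le_of_lt hapos) (by ring)
      have he : (1 - a) • ((0:ℝ),(0:ℝ)) + a • ((1:ℝ),(0:ℝ)) = ((a:ℝ), (0:ℝ)) := by
        simp [Prod.smul_mk, Prod.mk_add_mk]
      rwa [he] at h
    -- concavity along the chord from (a,0) to (0,-1)
    have hB : (1 - t ^ 3) * v (a,0) + t ^ 3 * v (0,-1) ≤ v (t ^ 2, -t ^ 3) := by
      have h := hconc.2 (Set.mem_univ ((a:ℝ),(0:ℝ))) (Set.mem_univ ((0:ℝ),(-1:ℝ)))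
        (le_of_lt hden) (by positivity : (0:ℝ) ≤ t ^ 3) (by ring)
      have he : (1 - t ^ 3) • ((a:ℝ),(0:ℝ)) + (t ^ 3) • ((0:ℝ),(-1:ℝ))
          = ((t ^ 2 : ℝ), (-t ^ 3 : ℝ)) := by
        simp [Prod.smul_mk, Prod.mk_add_mk, haeq]
      rwa [he] at h
    -- maximality at f 0 = (0,0)
    have hM : v (t ^ 2, -t ^ 3) ≤ v (0,0) := by
      have : ((t ^ 2 : ℝ), (-t ^ 3 : ℝ)) ∈ (fun x => ((x:ℝ) ^ 2, -x ^ 3)) '' Set.Ici 0 :=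
        ⟨t, le_of_lt ht0, rfl⟩
      have h := hmax _ this
      simpa using h
    -- derive the contradiction
    have key : t ^ 3 * D ≥ t ^ 2 * c := by nlinarith
    have htDc : c ≤ t * D := by
      have ht2pos : 0 < t ^ 2 := by positivity
      nlinarith
    have : c ≤ c / 2 := le_trans htDc htD
    linarith
end
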